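/- arXiv:2412.19520 — 4 statements merged into one kernel-verified Lean document; each statement's English description precedes it below -/
import Mathlib

section
/- Lemma 3.3 (squared L² distance controlled by KL divergence): Let Ω ⊆ ℝ^d be a measurable set equipped with the Lebesgue measure, and let p, q : Ω → ℝ be measurable probability densities (p, q ≥ 0 with ∫_Ω p = ∫_Ω q = 1) such that 0 < p(x) < τ and 0 < q(x) < τ for all x ∈ Ω, for some constant τ > 0, and such that x ↦ p(x) log(p(x)/q(x)) is integrable on Ω. Then ∫_Ω |p(x) − q(x)|² dx ≤ (2τ / (1 − log 2)) · D_KL(p‖q). -/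
open MeasureTheory

/-- Pointwise key inequality: for `0 < a, b < τ`,
`(a - b)² ≤ (2τ/(1 - log 2)) (a log(a/b) - a + b)`. -/
lemma kl_key (τ a b : ℝ) (hτ : 0 < τ) (ha : 0 < a) (haτ : a < τ) (hb : 0 < b) (hbτ : b < τ) :
    (a - b) ^ 2 ≤ (2 * τ / (1 - Real.log 2)) * (a * Real.log (a / b) - a + b) := by
  have hlog2lt : Real.log 2 < 1 := by
    have := Real.log_lt_sub_one_of_pos (by norm_num : (0:ℝ) < 2) (by norm_num)
    linarith
  have hden : (0:ℝ) < 1 - Real.log 2 := by linarith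
  have hhalf : 1 - Real.log 2 ≤ 1/2 := by
    have := Real.log_two_gt_d9; norm_num at this ⊢; linarith
  have hCge : 4 * τ ≤ 2 * τ / (1 - Real.log 2) := by
    rw [le_div_iff₀ hden]; nlinarith
  have hba : 0 < b / a := div_pos hb ha
  have hs : 0 < Real.sqrt (b / a) := Real.sqrt_pos.mpr hba
  have h1 : Real.log (Real.sqrt (b / a)) ≤ Real.sqrt (b / a) - 1 :=
    Real.log_le_sub_one_of_pos hs
  have h2 : Real.log (a / b) = -2 * Real.log (Real.sqrt (b / a)) := by
    rw [Real.log_sqrt hba.le, Real.log_div hb.ne' ha.ne', Real.log_div ha.ne' hb.ne']; ring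
  have h3 : a * Real.sqrt (b / a) = Real.sqrt a * Real.sqrt b := by
    rw [show a * Real.sqrt (b / a) = Real.sqrt (a ^ 2) * Real.sqrt (b / a) by
        rw [Real.sqrt_sq ha.le],
      ← Real.sqrt_mul (sq_nonneg a), ← Real.sqrt_mul ha.le]
    congr 1
    field_simp
  have hsa : Real.sqrt a ^ 2 = a := Real.sq_sqrt ha.le
  have hsb : Real.sqrt b ^ 2 = b := Real.sq_sqrt hb.le
  have hlogline : a * Real.log (a / b) ≥ -2 * a * (Real.sqrt (b / a) - 1) := by
    rw [h2]; nlinarith [h1, ha]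
  have hcore : (Real.sqrt a - Real.sqrt b) ^ 2 ≤ a * Real.log (a / b) - a + b := by
    nlinarith [h3, hsa, hsb, hlogline]
  have hsaτ : Real.sqrt a ≤ Real.sqrt τ := Real.sqrt_le_sqrt haτ.le
  have hsbτ : Real.sqrt b ≤ Real.sqrt τ := Real.sqrt_le_sqrt hbτ.le
  have hsττ : Real.sqrt τ ^ 2 = τ := Real.sq_sqrt hτ.le
  have hfactor : (a - b) ^ 2 ≤ 4 * τ * (Real.sqrt a - Real.sqrt b) ^ 2 := by
    have hab : a - b = (Real.sqrt a - Real.sqrt b) * (Real.sqrt a + Real.sqrt b) := by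
      nlinarith [hsa, hsb]
    rw [hab]
    have hsum : (Real.sqrt a + Real.sqrt b) ^ 2 ≤ 4 * τ := by
      nlinarith [Real.sqrt_nonneg a, Real.sqrt_nonneg b]
    nlinarith [sq_nonneg (Real.sqrt a - Real.sqrt b),
      sq_nonneg ((Real.sqrt a - Real.sqrt b) * (Real.sqrt a + Real.sqrt b)),
      mul_pow (Real.sqrt a - Real.sqrt b) (Real.sqrt a + Real.sqrt b) 2]
  have hgnn : 0 ≤ a * Real.log (a / b) - a + b :=
    le_trans (sq_nonneg _) hcore
  calc (a - b) ^ 2 ≤ 4 * τ * (Real.sqrt a - Real.sqrt b) ^ 2 := hfactor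
    _ ≤ 4 * τ * (a * Real.log (a / b) - a + b) := by
        apply mul_le_mul_of_nonneg_left hcore; positivity
    _ ≤ (2 * τ / (1 - Real.log 2)) * (a * Real.log (a / b) - a + b) :=
        mul_le_mul_of_nonneg_right hCge hgnn

/-- Lemma 3.3: squared `L²` distance controlled by the KL divergence. If `p, q` are
probability densities on a measurable set `Ω ⊆ ℝ^d`, both bounded between `0` and `τ`
on `Ω`, and `p log (p/q)` is integrable on `Ω`, then
`∫_Ω |p - q|² ≤ (2τ / (1 - log 2)) D_KL(p‖q)`. -/
theorem sq_L2_le_KL (d : ℕ) (τ : ℝ) (hτ : 0 < τ)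
    (Ω : Set (EuclideanSpace ℝ (Fin d))) (hΩ : MeasurableSet Ω)
    (p q : EuclideanSpace ℝ (Fin d) → ℝ) (hpm : Measurable p) (hqm : Measurable q)
    (hpb : ∀ x ∈ Ω, 0 < p x ∧ p x < τ) (hqb : ∀ x ∈ Ω, 0 < q x ∧ q x < τ)
    (hp1 : ∫ x in Ω, p x = 1) (hq1 : ∫ x in Ω, q x = 1)
    (hkl : IntegrableOn (fun x => p x * Real.log (p x / q x)) Ω) :
    ∫ x in Ω, |p x - q x| ^ 2 ≤
      (2 * τ / (1 - Real.log 2)) * ∫ x in Ω, p x * Real.log (p x / q x) := by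
  have hpi : IntegrableOn p Ω := by
    by_contra h
    rw [integral_undef h] at hp1; norm_num at hp1
  have hqi : IntegrableOn q Ω := by
    by_contra h
    rw [integral_undef h] at hq1; norm_num at hq1
  set C := 2 * τ / (1 - Real.log 2) with hC
  have hrhs : IntegrableOn (fun x => C * (p x * Real.log (p x / q x) - p x + q x)) Ω :=
    (((hkl.sub hpi).add hqi).const_mul C)
  have hlhs : IntegrableOn (fun x => |p x - q x| ^ 2) Ω := by
    apply Integrable.mono' ((hpi.add hqi).const_mul τ)
      (((hpm.sub hqm).abs.pow_const 2).aestronglyMeasurable)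
    rw [ae_restrict_iff' hΩ]
    refine ae_of_all _ fun x hx => ?_
    obtain ⟨hp0, hpτ⟩ := hpb x hx
    obtain ⟨hq0, hqτ⟩ := hqb x hx
    rw [Real.norm_eq_abs, abs_of_nonneg (by positivity)]
    have h1 : |p x - q x| ≤ τ := by rw [abs_le]; constructor <;> linarith
    have h2 : |p x - q x| ≤ p x + q x := by rw [abs_le]; constructor <;> linarith
    calc |p x - q x| ^ 2 = |p x - q x| * |p x - q x| := sq (|p x - q x|) ▸ by ring
      _ ≤ τ * (p x + q x) := by
          apply mul_le_mul h1 h2 (abs_nonneg _) hτ.le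
  have hmono : ∫ x in Ω, |p x - q x| ^ 2 ≤
      ∫ x in Ω, C * (p x * Real.log (p x / q x) - p x + q x) := by
    apply setIntegral_mono_on hlhs hrhs hΩ
    intro x hx
    obtain ⟨hp0, hpτ⟩ := hpb x hx
    obtain ⟨hq0, hqτ⟩ := hqb x hx
    rw [sq_abs]
    exact kl_key τ (p x) (q x) hτ hp0 hpτ hq0 hqτ
  have heq : ∫ x in Ω, C * (p x * Real.log (p x / q x) - p x + q x)
      = C * ∫ x in Ω, p x * Real.log (p x / q x) := by
    rw [MeasureTheory.integral_const_mul]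
    have h4 : ∫ x in Ω, (p x * Real.log (p x / q x) - p x + q x)
        = (∫ x in Ω, (p x * Real.log (p x / q x) - p x)) + ∫ x in Ω, q x :=
      integral_add (hkl.sub hpi) hqi
    have h5 : ∫ x in Ω, (p x * Real.log (p x / q x) - p x)
        = (∫ x in Ω, p x * Real.log (p x / q x)) - ∫ x in Ω, p x :=
      integral_sub hkl hpi
    rw [h4, h5, hp1, hq1]
    ring
  rw [heq] at hmono
  exact hmono
end

section
/- For every real number x with −1 < x ≤ 1, one has log(1 + x) ≤ x − (1 − log 2) x²; equivalently, 1 + x ≤ e^{x − (1 − log 2) x²} on (−1, 1]. -/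
/-!
Put `β = 1 - log 2` and `f x = x - β x² - log (1 + x)`, so that `f 0 = f 1 = 0`. Since
`f' x = x (1 - 2β (1 + x)) / (1 + x)` and `2β < 1`, `f` decreases on `(-1, 0]`, increases on `[0, c]`
and decreases on `[c, 1]`, where `2β (1 + c) = 1`. Hence `f ≥ 0` on `(-1, 1]`.
-/

open Real Set

noncomputable def logDefect (β x : ℝ) : ℝ := x - β * x ^ 2 - log (1 + x)

section

variable {β : ℝ}

lemma hasDerivAt_logDefect {x : ℝ} (hx : -1 < x) :
    HasDerivAt (logDefect β) (x * (1 - 2 * β * (1 + x)) / (1 + x)) x := by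
  have hx' : 1 + x ≠ 0 := by linarith
  have h := ((hasDerivAt_id' x).sub (((hasDerivAt_id' x).pow 2).const_mul β)).sub
    (((hasDerivAt_id' x).const_add 1).log hx')
  exact h.congr_deriv (by field_simp; ring)

lemma continuousOn_logDefect : ContinuousOn (logDefect β) (Ioi (-1)) := fun _ hx =>
  (hasDerivAt_logDefect hx).continuousAt.continuousWithinAt

lemma differentiableOn_logDefect : DifferentiableOn ℝ (logDefect β) (Ioi (-1)) := fun _ hx =>
  (hasDerivAt_logDefect hx).differentiableAt.differentiableWithinAt

lemma monotoneOn_logDefect {D : Set ℝ} (hD : Convex ℝ D) (hD₁ : D ⊆ Ioi (-1))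
    (hsign : ∀ x ∈ interior D, 0 ≤ x * (1 - 2 * β * (1 + x))) :
    MonotoneOn (logDefect β) D := by
  refine monotoneOn_of_deriv_nonneg hD (continuousOn_logDefect.mono hD₁)
    (differentiableOn_logDefect.mono (interior_subset.trans hD₁)) fun x hx => ?_
  have hx₁ : -1 < x := hD₁ (interior_subset hx)
  rw [(hasDerivAt_logDefect hx₁).deriv]
  exact div_nonneg (hsign x hx) (by linarith)

lemma antitoneOn_logDefect {D : Set ℝ} (hD : Convex ℝ D) (hD₁ : D ⊆ Ioi (-1))
    (hsign : ∀ x ∈ interior D, x * (1 - 2 * β * (1 + x)) ≤ 0) :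
    AntitoneOn (logDefect β) D := by
  refine antitoneOn_of_deriv_nonpos hD (continuousOn_logDefect.mono hD₁)
    (differentiableOn_logDefect.mono (interior_subset.trans hD₁)) fun x hx => ?_
  have hx₁ : -1 < x := hD₁ (interior_subset hx)
  rw [(hasDerivAt_logDefect hx₁).deriv]
  exact div_nonpos_of_nonpos_of_nonneg (hsign x hx) (by linarith)

end

/-- For every real `x` with `-1 < x ≤ 1`, `log (1 + x) ≤ x - (1 - log 2) * x ^ 2`. -/
theorem log_one_add_le_sub_beta_sq (x : ℝ) (h1 : -1 < x) (h2 : x ≤ 1) :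
    Real.log (1 + x) ≤ x - (1 - Real.log 2) * x ^ 2 := by
  set β := 1 - log 2 with hβ_def
  have hβ₀ : 0 ≤ β := by linarith [log_two_lt_d9]
  have hβ₁ : 2 * β ≤ 1 := by linarith [log_two_gt_d9]
  have hf₀ : logDefect β 0 = 0 := by simp [logDefect]
  have hf₁ : logDefect β 1 = 0 := by norm_num [logDefect, hβ_def]
  suffices 0 ≤ logDefect β x by rw [logDefect] at this; linarith
  rcases le_or_gt x 0 with hx | hx
  · refine hf₀ ▸ antitoneOn_logDefect (convex_Ioc _ _) Ioc_subset_Ioi_self (fun y hy => ?_)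
      ⟨h1, hx⟩ ⟨by norm_num, le_rfl⟩ hx
    rw [interior_Ioc] at hy
    exact mul_nonpos_of_nonpos_of_nonneg hy.2.le (by nlinarith [hy.1, hy.2])
  by_cases hc : 2 * β * (1 + x) ≤ 1
  · refine hf₀ ▸ monotoneOn_logDefect (convex_Icc _ _) (fun y hy => ?_) (fun y hy => ?_)
      ⟨le_rfl, hx.le⟩ ⟨hx.le, le_rfl⟩ hx.le
    · exact lt_of_lt_of_le (by norm_num) hy.1
    · rw [interior_Icc] at hy
      exact mul_nonneg hy.1.le (by nlinarith [mul_le_mul_of_nonneg_left hy.2.le hβ₀])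
  · refine hf₁ ▸ antitoneOn_logDefect (convex_Icc _ _) (fun y hy => ?_) (fun y hy => ?_)
      ⟨le_rfl, h2⟩ ⟨h2, le_rfl⟩ h2
    · exact h1.trans_le hy.1
    · rw [interior_Icc] at hy
      exact mul_nonpos_of_nonneg_of_nonpos (hx.trans hy.1).le
        (by nlinarith [mul_le_mul_of_nonneg_left hy.1.le hβ₀])
end

section
/- Split lower bound for the KL divergence (key step in the proof of Lemma 3.3): Let Ω ⊆ ℝ^d be measurable with the Lebesgue measure, and let p, q : Ω → ℝ be measurable probability densities with p(x) > 0 and q(x) > 0 for all x ∈ Ω, such that p log(p/q) is integrable. Define A = {x ∈ Ω : q(x) > 2p(x)} and B = {x ∈ Ω : q(x) ≤ 2p(x)}. Then ∫_Ω p log(p/q) dx ≥ (1 − log 2) · ( ∫_A (q(x) − p(x)) dx + ∫_B (q(x) − p(x))²/p(x) dx ). -/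
/-!
With `t = q / p` the integrand `p log (p / q) + (q - p)` equals `p (t - 1 - log t)`, and adding
`q - p` does not change the integral because `∫ p = ∫ q`. For `t ≥ 2`,
`t - 1 - log t ≥ (1 - log 2) (t - 1)` amounts to `log t ≤ log 2 · (t - 1)`, which follows from
the tangent of `log` at `2` because `log 2 ≥ 1 / 2`. For `0 < t ≤ 2`, the difference
`t - 1 - log t - (1 - log 2) (t - 1)²` vanishes at `1` and `2`, and its derivative
`(t - 1) (1 / t - 2 (1 - log 2))` changes sign only at `1` and at
`1 / (2 (1 - log 2)) ∈ (1, 2)`, so it is nonnegative. Integrating the two pointwise bounds over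
`{q > 2p}` and `{q ≤ 2p}` gives the claim.
-/

open MeasureTheory Set Real

lemma one_half_lt_log_two : 1 / 2 < log 2 := by
  have := log_two_gt_d9
  norm_num at this ⊢
  linarith

lemma log_two_lt_one : log 2 < 1 := by
  linarith [log_lt_sub_one_of_pos two_pos (by norm_num : (2 : ℝ) ≠ 1)]

lemma hasDerivAt_sub_log_sub_mul_sq (c : ℝ) {x : ℝ} (hx : x ≠ 0) :
    HasDerivAt (fun t => t - 1 - log t - c * (t - 1) ^ 2) ((x - 1) * (x⁻¹ - 2 * c)) x := by
  have h := (((hasDerivAt_id x).sub_const 1).sub (hasDerivAt_log hx)).sub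
    ((((hasDerivAt_id x).sub_const 1).pow 2).const_mul c)
  refine h.congr_deriv ?_
  simp only [id, Nat.cast_ofNat]
  field_simp
  ring

lemma monotoneOn_sub_log_sub_mul_sq {c a b : ℝ} (ha : 0 < a)
    (h : ∀ x ∈ Ioo a b, 0 ≤ (x - 1) * (x⁻¹ - 2 * c)) :
    MonotoneOn (fun t => t - 1 - log t - c * (t - 1) ^ 2) (Icc a b) := by
  have hderiv (x) (hx : x ∈ Icc a b) := hasDerivAt_sub_log_sub_mul_sq c (ha.trans_le hx.1).ne'
  refine monotoneOn_of_hasDerivWithinAt_nonneg (convex_Icc a b)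
    (fun x hx => (hderiv x hx).continuousAt.continuousWithinAt) ?_ (by rwa [interior_Icc])
  rw [interior_Icc]
  exact fun x hx => (hderiv x (Ioo_subset_Icc_self hx)).hasDerivWithinAt

lemma antitoneOn_sub_log_sub_mul_sq {c a b : ℝ} (ha : 0 < a)
    (h : ∀ x ∈ Ioo a b, (x - 1) * (x⁻¹ - 2 * c) ≤ 0) :
    AntitoneOn (fun t => t - 1 - log t - c * (t - 1) ^ 2) (Icc a b) := by
  have hderiv (x) (hx : x ∈ Icc a b) := hasDerivAt_sub_log_sub_mul_sq c (ha.trans_le hx.1).ne'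
  refine antitoneOn_of_hasDerivWithinAt_nonpos (convex_Icc a b)
    (fun x hx => (hderiv x hx).continuousAt.continuousWithinAt) ?_ (by rwa [interior_Icc])
  rw [interior_Icc]
  exact fun x hx => (hderiv x (Ioo_subset_Icc_self hx)).hasDerivWithinAt

lemma one_sub_log_two_mul_sq_le {t : ℝ} (ht : 0 < t) (ht2 : t ≤ 2) :
    (1 - log 2) * (t - 1) ^ 2 ≤ t - 1 - log t := by
  set c := 1 - log 2
  set ψ := fun t => t - 1 - log t - c * (t - 1) ^ 2
  suffices 0 ≤ ψ t by simp only [ψ] at this; linarith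
  have hψ1 : ψ 1 = 0 := by simp [ψ]
  have hψ2 : ψ 2 = 0 := by simp only [ψ, c]; ring
  have hc : 2 * c < 1 := by linarith [one_half_lt_log_two]
  have hfactor {x : ℝ} (hx : 0 < x) : x⁻¹ - 2 * c = x⁻¹ * (1 - 2 * c * x) := by field_simp
  rcases le_total t 1 with h1 | h1
  · rw [← hψ1]
    refine antitoneOn_sub_log_sub_mul_sq ht (fun x hx => ?_) ⟨le_rfl, h1⟩ ⟨h1, le_rfl⟩ h1
    have : 1 < x⁻¹ := (one_lt_inv₀ (ht.trans hx.1)).mpr hx.2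
    nlinarith [hx.2]
  -- the critical point `1 / (2c)` lies between `1` and `2`; compare `t` with it
  rcases le_total (2 * c * t) 1 with hm | hm
  · rw [← hψ1]
    refine monotoneOn_sub_log_sub_mul_sq one_pos (fun x hx => ?_)
      ⟨le_rfl, h1⟩ ⟨h1, le_rfl⟩ h1
    have hx0 : 0 < x := one_pos.trans hx.1
    have : 0 ≤ x⁻¹ - 2 * c := by
      rw [hfactor hx0]
      exact mul_nonneg (inv_pos.mpr hx0).le (by nlinarith [hx.2])
    nlinarith [hx.1]
  · rw [← hψ2]
    refine antitoneOn_sub_log_sub_mul_sq ht (fun x hx => ?_) ⟨le_rfl, ht2⟩ ⟨ht2, le_rfl⟩ ht2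
    have hx0 : 0 < x := ht.trans hx.1
    have : x⁻¹ - 2 * c ≤ 0 := by
      rw [hfactor hx0]
      exact mul_nonpos_of_nonneg_of_nonpos (inv_pos.mpr hx0).le (by nlinarith [hx.1])
    nlinarith [hx.1]

lemma log_le_log_two_mul_sub_one {t : ℝ} (ht : 2 ≤ t) : log t ≤ log 2 * (t - 1) := by
  have htangent := log_le_sub_one_of_pos (show 0 < t / 2 by positivity)
  rw [log_div (by positivity) two_ne_zero] at htangent
  nlinarith [one_half_lt_log_two]

lemma mul_log_div_add_sub_eq {p q : ℝ} (hp : 0 < p) :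
    p * log (p / q) + (q - p) = p * (q / p - 1 - log (q / p)) := by
  rw [← inv_div, log_inv]
  field_simp
  ring

lemma one_sub_log_two_mul_sub_le {p q : ℝ} (hp : 0 < p) (h : 2 * p < q) :
    (1 - log 2) * (q - p) ≤ p * log (p / q) + (q - p) := by
  have ht : 2 ≤ q / p := by rw [le_div_iff₀ hp]; linarith
  have hlog := mul_le_mul_of_nonneg_left (log_le_log_two_mul_sub_one ht) hp.le
  have e : p * (q / p - 1) = q - p := by field_simp
  rw [mul_left_comm, e] at hlog
  rw [mul_log_div_add_sub_eq hp, mul_sub p, e]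
  linarith

lemma one_sub_log_two_mul_sq_div_le {p q : ℝ} (hp : 0 < p) (hq : 0 < q) (h : q ≤ 2 * p) :
    (1 - log 2) * ((q - p) ^ 2 / p) ≤ p * log (p / q) + (q - p) := by
  have ht : q / p ≤ 2 := by rw [div_le_iff₀ hp]; linarith
  have hψ := mul_le_mul_of_nonneg_left (one_sub_log_two_mul_sq_le (div_pos hq hp) ht) hp.le
  have e : p * ((1 - log 2) * (q / p - 1) ^ 2) = (1 - log 2) * ((q - p) ^ 2 / p) := by
    field_simp
  rw [mul_log_div_add_sub_eq hp]
  linarith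

section Integral

variable {α : Type*} [MeasurableSpace α] {μ : Measure α}

lemma setIntegral_mul_log_div_add_sub {s : Set α} {p q : α → ℝ} (hp : IntegrableOn p s μ)
    (hq : IntegrableOn q s μ) (hpq : ∫ x in s, p x ∂μ = ∫ x in s, q x ∂μ)
    (hkl : IntegrableOn (fun x => p x * log (p x / q x)) s μ) :
    ∫ x in s, (p x * log (p x / q x) + (q x - p x)) ∂μ =
      ∫ x in s, p x * log (p x / q x) ∂μ := by
  have hqp : IntegrableOn (fun x => q x - p x) s μ := hq.sub hp
  rw [integral_add hkl hqp, integral_sub hq hp, hpq, sub_self, add_zero]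

lemma setIntegral_add_setIntegral_le_setIntegral_union {A B : Set α} {f g h : α → ℝ}
    (hAB : Disjoint A B) (hA : MeasurableSet A) (hB : MeasurableSet B)
    (hh : IntegrableOn h (A ∪ B) μ) (hf : IntegrableOn f A μ) (hg : IntegrableOn g B μ)
    (hfh : ∀ x ∈ A, f x ≤ h x) (hgh : ∀ x ∈ B, g x ≤ h x) :
    ∫ x in A, f x ∂μ + ∫ x in B, g x ∂μ ≤ ∫ x in A ∪ B, h x ∂μ := by
  have hhA := hh.mono_set subset_union_left
  have hhB := hh.mono_set subset_union_right
  rw [setIntegral_union hAB hB hhA hhB]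
  exact add_le_add (setIntegral_mono_on hf hhA hA hfh) (setIntegral_mono_on hg hhB hB hgh)

end Integral

/-- Split lower bound for the KL divergence (key step in the proof of Lemma 3.3):
with `A = {q > 2p}` and `B = {q ≤ 2p}` inside `Ω`,
`∫_Ω p log (p/q) ≥ (1 - log 2) ( ∫_A (q - p) + ∫_B (q - p)²/p )`. -/
theorem KL_split_lower_bound (d : ℕ)
    (Ω : Set (EuclideanSpace ℝ (Fin d))) (hΩ : MeasurableSet Ω)
    (p q : EuclideanSpace ℝ (Fin d) → ℝ) (hpm : Measurable p) (hqm : Measurable q)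
    (hppos : ∀ x ∈ Ω, 0 < p x) (hqpos : ∀ x ∈ Ω, 0 < q x)
    (hp1 : ∫ x in Ω, p x = 1) (hq1 : ∫ x in Ω, q x = 1)
    (hkl : IntegrableOn (fun x => p x * Real.log (p x / q x)) Ω) :
    (1 - Real.log 2) *
        ((∫ x in Ω ∩ {x | 2 * p x < q x}, (q x - p x)) +
          ∫ x in Ω ∩ {x | q x ≤ 2 * p x}, (q x - p x) ^ 2 / p x) ≤
      ∫ x in Ω, p x * Real.log (p x / q x) := by
  have hp : IntegrableOn p Ω := Integrable.of_integral_ne_zero (by rw [hp1]; exact one_ne_zero)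
  have hq : IntegrableOn q Ω := Integrable.of_integral_ne_zero (by rw [hq1]; exact one_ne_zero)
  set A := Ω ∩ {x | 2 * p x < q x}
  set B := Ω ∩ {x | q x ≤ 2 * p x}
  have hA : MeasurableSet A := hΩ.inter (measurableSet_lt (by fun_prop) hqm)
  have hB : MeasurableSet B := hΩ.inter (measurableSet_le hqm (by fun_prop))
  have hAB : Disjoint A B := disjoint_left.2 fun x hxA hxB =>
    (show 2 * p x < q x from hxA.2).not_ge hxB.2
  have hΩAB : A ∪ B = Ω := by
    convert inter_union_compl Ω {x | 2 * p x < q x} using 3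
    ext x
    simp [not_lt]
  have hg : IntegrableOn (fun x => p x * log (p x / q x) + (q x - p x)) Ω := hkl.add (hq.sub hp)
  have hB_bound (x) (hx : x ∈ B) :=
    one_sub_log_two_mul_sq_div_le (hppos x hx.1) (hqpos x hx.1) hx.2
  have hB_int : IntegrableOn (fun x => (1 - log 2) * ((q x - p x) ^ 2 / p x)) B := by
    refine (hg.mono_set inter_subset_left).mono'
      (by fun_prop : Measurable _).aestronglyMeasurable ((ae_restrict_iff' hB).2 (ae_of_all _ ?_))
    intro x hx
    have := hppos x hx.1
    have := sub_pos.2 log_two_lt_one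
    rw [norm_of_nonneg (by positivity)]
    exact hB_bound x hx
  rw [← setIntegral_mul_log_div_add_sub hp hq (hp1.trans hq1.symm) hkl, ← hΩAB, mul_add,
    ← integral_const_mul, ← integral_const_mul]
  exact setIntegral_add_setIntegral_le_setIntegral_union hAB hA hB
    (hΩAB ▸ hg) (((hq.sub hp).mono_set inter_subset_left).const_mul _) hB_int
    (fun x hx => one_sub_log_two_mul_sub_le (hppos x hx.1) hx.2) hB_bound
end

section
/- Integrated shifted-ratio estimate on the torus (Step 4 of the proof of Theorem 3.1, integrated form): Let c ≥ 1, let p, q : ℝ^d → ℝ be measurable, (2L)ℤ^d-periodic, with 1/c ≤ p(x) ≤ c and 1/c ≤ q(x) ≤ c for all x, and let a ∈ ℝ^d. Then ∫_Q | p(x − a)/p(x) − q(x − a)/q(x) |² p(x) dx ≤ 4 c⁷ ∫_Q |p(x) − q(x)|² dx, where Q = [−L, L)^d. -/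
open MeasureTheory

/-- The fundamental domain `Q = [-L, L)^d` of the torus of side `2L`. -/
def fundDomain (d : ℕ) (L : ℝ) : Set (EuclideanSpace ℝ (Fin d)) :=
  {x | ∀ i, -L ≤ x i ∧ x i < L}

/-- A function on `ℝ^d` is `(2L)ℤ^d`-periodic. -/
def IsPeriodic {α : Type*} (d : ℕ) (L : ℝ) (f : EuclideanSpace ℝ (Fin d) → α) : Prop :=
  ∀ (x : EuclideanSpace ℝ (Fin d)) (m : Fin d → ℤ),
    f (x + ∑ i, ((2 * L) * (m i : ℝ)) • EuclideanSpace.single i (1 : ℝ)) = f x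

/-
Writing `A = p(x-a)`, `B = p(x)`, `A' = q(x-a)`, `B' = q(x)`, the identity
`A/B - A'/B' = ((A - A') B' + A' (B' - B)) / (B B')` with `B B' ≥ c⁻²` gives pointwise
`|A/B - A'/B'|² B ≤ 2c⁷ (|A - A'|² + |B - B'|²)`. Integrating over `Q`, the shifted term
`|p - q|²(x - a)` has the same integral as `|p - q|²(x)`: both `Q` and `-a + Q` are fundamental
domains of the lattice `(2L)ℤ^d`, on which `|p - q|²` is invariant.
-/

section RatioBound

variable {c A B A' B' : ℝ}

lemma abs_div_sub_div_le (hc : 0 < c) (hA' : |A'| ≤ c) (hB : 1 / c ≤ B) (hB' : 1 / c ≤ B')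
    (hB'c : B' ≤ c) : |A / B - A' / B'| ≤ c ^ 3 * (|A - A'| + |B - B'|) := by
  have hB0 : 0 < B := (one_div_pos.2 hc).trans_le hB
  have hB'0 : 0 < B' := (one_div_pos.2 hc).trans_le hB'
  have hnum : |(A - A') * B' + A' * (B' - B)| ≤ c * |A - A'| + c * |B - B'| :=
    calc |(A - A') * B' + A' * (B' - B)| ≤ |A - A'| * |B'| + |A'| * |B' - B| :=
          (abs_add_le _ _).trans_eq (by rw [abs_mul, abs_mul])
      _ ≤ |A - A'| * c + c * |B - B'| := by
          rw [abs_of_pos hB'0, abs_sub_comm B' B]; gcongr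
      _ = c * |A - A'| + c * |B - B'| := by ring
  have hden : 1 / c ^ 2 ≤ B * B' := by
    rw [one_div, ← inv_pow, sq, ← one_div]; exact mul_le_mul hB hB' (by positivity) hB0.le
  calc |A / B - A' / B'| = |(A - A') * B' + A' * (B' - B)| / (B * B') := by
        rw [div_sub_div _ _ hB0.ne' hB'0.ne', abs_div, abs_of_pos (mul_pos hB0 hB'0)]; ring_nf
    _ ≤ (c * |A - A'| + c * |B - B'|) / (1 / c ^ 2) :=
        div_le_div₀ (by positivity) hnum (by positivity) hden
    _ = c ^ 3 * (|A - A'| + |B - B'|) := by field_simp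

lemma sq_abs_div_sub_div_mul_le (hc : 0 < c) (hA' : |A'| ≤ c) (hB : 1 / c ≤ B) (hBc : B ≤ c)
    (hB' : 1 / c ≤ B') (hB'c : B' ≤ c) :
    |A / B - A' / B'| ^ 2 * B ≤ 2 * c ^ 7 * (|A - A'| ^ 2 + |B - B'| ^ 2) :=
  calc |A / B - A' / B'| ^ 2 * B ≤ (c ^ 3 * (|A - A'| + |B - B'|)) ^ 2 * c := by
        gcongr
        · exact ((one_div_pos.2 hc).trans_le hB).le
        · exact abs_div_sub_div_le hc hA' hB hB' hB'c
    _ = c ^ 7 * (|A - A'| + |B - B'|) ^ 2 := by ring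
    _ ≤ c ^ 7 * (2 * (|A - A'| ^ 2 + |B - B'| ^ 2)) := by gcongr; exact add_sq_le
    _ = 2 * c ^ 7 * (|A - A'| ^ 2 + |B - B'| ^ 2) := by ring

end RatioBound

open Pointwise

section PeriodLattice

variable {d : ℕ} {L : ℝ}

noncomputable def periodBasis (d : ℕ) (hL : L ≠ 0) :
    Module.Basis (Fin d) ℝ (EuclideanSpace ℝ (Fin d)) :=
  (EuclideanSpace.basisFun (Fin d) ℝ).toBasis.unitsSMul fun _ => Units.mk0 (2 * L) (by simpa)

lemma periodBasis_apply (hL : L ≠ 0) (i : Fin d) :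
    periodBasis d hL i = (2 * L) • EuclideanSpace.single i (1 : ℝ) := by
  simp [periodBasis, Module.Basis.unitsSMul_apply, Units.smul_def]

lemma periodBasis_repr_apply (hL : L ≠ 0) (x : EuclideanSpace ℝ (Fin d)) (i : Fin d) :
    (periodBasis d hL).repr x i = (2 * L)⁻¹ * x i := by
  simp [periodBasis, Module.Basis.repr_unitsSMul, Units.smul_def]

abbrev periodLattice (d : ℕ) (hL : L ≠ 0) : AddSubgroup (EuclideanSpace ℝ (Fin d)) :=
  (Submodule.span ℤ (Set.range (periodBasis d hL))).toAddSubgroup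

instance (hL : L ≠ 0) : Countable (periodLattice d hL) :=
  inferInstanceAs (Countable (Submodule.span ℤ _))

lemma IsPeriodic.vadd_eq {α : Type*} {f : EuclideanSpace ℝ (Fin d) → α} (hf : IsPeriodic d L f)
    (hL : L ≠ 0) (g : periodLattice d hL) (x : EuclideanSpace ℝ (Fin d)) : f (g +ᵥ x) = f x := by
  obtain ⟨g, hg⟩ := g
  obtain ⟨m, rfl⟩ := (Submodule.mem_span_range_iff_exists_fun ℤ).1
    (Submodule.mem_toAddSubgroup _ |>.1 hg)
  convert hf x m using 2
  rw [AddSubgroup.vadd_def, vadd_eq_add, add_comm]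
  refine congrArg _ (Finset.sum_congr rfl fun i _ => ?_ : ∑ i, m i • periodBasis d hL i = _)
  rw [periodBasis_apply, ← Int.cast_smul_eq_zsmul ℝ, smul_smul, mul_comm]

lemma fundDomain_eq_vadd_fundamentalDomain (hL : 0 < L) :
    fundDomain d L =
      (WithLp.toLp 2 fun _ => -L : EuclideanSpace ℝ (Fin d)) +ᵥ
        ZSpan.fundamentalDomain (periodBasis d hL.ne') := by
  ext x
  rw [Set.mem_vadd_set_iff_neg_vadd_mem]
  simp only [ZSpan.mem_fundamentalDomain, periodBasis_repr_apply, fundDomain, Set.mem_ofPred_eq,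
    Set.mem_Ico]
  refine forall_congr' fun i => ?_
  have hx : (-(WithLp.toLp 2 fun _ => -L : EuclideanSpace ℝ (Fin d)) +ᵥ x) i = x i + L := by
    simp [add_comm]
  have h2L : 0 < 2 * L := by positivity
  rw [hx, inv_mul_eq_div, le_div_iff₀ h2L, div_lt_one h2L]
  constructor <;> rintro ⟨h₁, h₂⟩ <;> constructor <;> linarith

lemma isAddFundamentalDomain_vadd_fundDomain (hL : 0 < L) (v : EuclideanSpace ℝ (Fin d)) :
    IsAddFundamentalDomain (periodLattice d hL.ne') (v +ᵥ fundDomain d L) := by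
  rw [fundDomain_eq_vadd_fundamentalDomain hL, vadd_vadd]
  exact (ZSpan.isAddFundamentalDomain' _ volume).vadd_of_comm _

lemma volume_fundDomain_lt_top (hL : 0 < L) : volume (fundDomain d L) < ⊤ := by
  rw [fundDomain_eq_vadd_fundamentalDomain hL]
  exact ((ZSpan.fundamentalDomain_isBounded _).vadd _).measure_lt_top

lemma IsPeriodic.setIntegral_fundDomain_comp_sub {E : Type*} [NormedAddCommGroup E]
    [NormedSpace ℝ E] {f : EuclideanSpace ℝ (Fin d) → E} (hf : IsPeriodic d L f) (hL : 0 < L)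
    (a : EuclideanSpace ℝ (Fin d)) :
    ∫ x in fundDomain d L, f (x - a) = ∫ x in fundDomain d L, f x := by
  have hQ := isAddFundamentalDomain_vadd_fundDomain (d := d) hL 0
  rw [zero_vadd] at hQ
  calc ∫ x in fundDomain d L, f (x - a) = ∫ x in -a +ᵥ fundDomain d L, f x := by
        simp_rw [sub_eq_neg_add]
        exact ((measurePreserving_add_left volume (-a)).setIntegral_image_emb
          (measurableEmbedding_addLeft (-a)) _ _).symm
    _ = ∫ x in fundDomain d L, f x :=
        (isAddFundamentalDomain_vadd_fundDomain hL (-a)).setIntegral_eq hQ (hf.vadd_eq hL.ne')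

end PeriodLattice

/-- Integrated shifted-ratio estimate on the torus (Step 4 of the proof of Theorem 3.1):
for `(2L)ℤ^d`-periodic densities `p, q` with `1/c ≤ p, q ≤ c`,
`∫_Q |p(x-a)/p(x) - q(x-a)/q(x)|² p(x) dx ≤ 4 c⁷ ∫_Q |p - q|²`. -/
theorem integrated_shifted_ratio_estimate (d : ℕ) (L c : ℝ) (hL : 0 < L) (hc : 1 ≤ c)
    (p q : EuclideanSpace ℝ (Fin d) → ℝ) (hpm : Measurable p) (hqm : Measurable q)
    (hp_per : IsPeriodic d L p) (hq_per : IsPeriodic d L q)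
    (hp : ∀ x, 1 / c ≤ p x ∧ p x ≤ c) (hq : ∀ x, 1 / c ≤ q x ∧ q x ≤ c)
    (a : EuclideanSpace ℝ (Fin d)) :
    ∫ x in fundDomain d L, |p (x - a) / p x - q (x - a) / q x| ^ 2 * p x ≤
      4 * c ^ 7 * ∫ x in fundDomain d L, |p x - q x| ^ 2 := by
  have hc0 : 0 < c := by linarith
  have hp0 (x) : 0 < p x := (one_div_pos.2 hc0).trans_le (hp x).1
  have hq0 (x) : 0 < q x := (one_div_pos.2 hc0).trans_le (hq x).1
  set G : EuclideanSpace ℝ (Fin d) → ℝ := fun x => |p x - q x| ^ 2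
  have hG_per : IsPeriodic d L G := fun x m => by simp only [G, hp_per x m, hq_per x m]
  have hG_le (x) : ‖G x‖ ≤ c ^ 2 := by
    rw [Real.norm_of_nonneg (by positivity)]
    exact pow_le_pow_left₀ (abs_nonneg _)
      (abs_sub_le_of_nonneg_of_le (hp0 x).le (hp x).2 (hq0 x).le (hq x).2) 2
  have hG_int (b) : IntegrableOn (fun x => G (x - b)) (fundDomain d L) :=
    .of_bound (volume_fundDomain_lt_top hL)
      (((hpm.sub hqm).abs.pow_const 2).comp (measurable_sub_const b)).aestronglyMeasurable
      (c ^ 2) (ae_of_all _ fun _ => hG_le _)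
  have hG_int₀ : IntegrableOn G (fundDomain d L) := by simpa using hG_int 0
  calc ∫ x in fundDomain d L, |p (x - a) / p x - q (x - a) / q x| ^ 2 * p x
      ≤ ∫ x in fundDomain d L, 2 * c ^ 7 * (G (x - a) + G x) := by
        refine integral_mono_of_nonneg (ae_of_all _ fun x => mul_nonneg (sq_nonneg _) (hp0 x).le)
          (((hG_int a).add hG_int₀).const_mul _) (ae_of_all _ fun x => ?_)
        simpa only [G] using sq_abs_div_sub_div_mul_le hc0
          ((abs_of_pos (hq0 _)).trans_le (hq _).2) (hp x).1 (hp x).2 (hq x).1 (hq x).2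
    _ = 2 * c ^ 7 * ((∫ x in fundDomain d L, G (x - a)) + ∫ x in fundDomain d L, G x) := by
        rw [integral_const_mul, integral_add (hG_int a) hG_int₀]
    _ = 4 * c ^ 7 * ∫ x in fundDomain d L, G x := by
        simp only [hG_per.setIntegral_fundDomain_comp_sub hL]; ring
end
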